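/- For any m, n ≥ 1 and any tuples x̃ = (x_1,…,x_m) ∈ ℕ^m and ỹ = (y_1,…,y_n) ∈ ℕ^n, the Gauss measure of cylinders satisfies log 2 ≤ μ(I(x_1,…,x_m,y_1,…,y_n)) / (μ(I(x_1,…,x_m)) · μ(I(y_1,…,y_n))) ≤ 2·log 2. -/

import Mathlib

open MeasureTheory Filter

/-- The Gauss map `T(x) = 1/x mod 1`. -/
noncomputable def gaussMap (x : ℝ) : ℝ := Int.fract (1 / x)

/-- The `n`-th partial quotient (indexed from `0`): `a_{n+1}(ω) = ⌊1 / T^n(ω)⌋`. -/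
noncomputable def cfDigit (n : ℕ) (ω : ℝ) : ℕ := ⌊1 / (gaussMap^[n] ω)⌋₊

/-- The Gauss measure on `(0,1)`, with density `1/((log 2)(1+t))` w.r.t. Lebesgue. -/
noncomputable def gaussMeasure : Measure ℝ :=
  (volume.restrict (Set.Ioo (0 : ℝ) 1)).withDensity
    (fun t => ENNReal.ofReal (1 / (Real.log 2 * (1 + t))))

/-- The cylinder `I(a_1, …, a_n)`: irrationals in `(0,1)` whose continued fraction
expansion begins with `a_1, …, a_n`. -/
def cylinder (n : ℕ) (a : Fin n → ℕ) : Set ℝ :=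
  {ω | ω ∈ Set.Ioo (0 : ℝ) 1 ∧ Irrational ω ∧ ∀ i : Fin n, cfDigit i ω = a i}

/-!
The cylinder `I(a₁, …, aₙ)` is the image of the irrationals of `(0,1)` under the inverse branch
`ψ t = (p + p' t) / (q + q' t)` of `Tⁿ`, so `I(x̃ ỹ) = ψ_x̃ (I(ỹ))`, and the Gauss measure of
`ψ(J)` for `J ⊆ [0,1]` is `∫_J dt / (log 2 · (q + q' t)(p + q + (p' + q') t))`.
With `A = (p + q)(q + q')` and `B = q (p + p' + q + q')` one has `|A - B| = 1` and
`log 2 · μ(I(a₁, …, aₙ)) = |log A - log B|`, which lies between `1 / max A B` and `1 / min A B`.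
On `[0,1]` the quadratic in the density lies between `max A B · (1 + t) / 2` and
`min A B · (1 + t)`, hence the density is between `log 2 · μ(I(x̃))` and `2 log 2 · μ(I(x̃))`
times the Gauss density `1 / (log 2 · (1 + t))`; integrating over `J = I(ỹ)` bounds the ratio by
`log 2` and `2 log 2`.
-/

open Set

theorem sub_le_sub_of_hasDerivAt_le {f g f' g' : ℝ → ℝ} {a b : ℝ} (hab : a ≤ b)
    (hf : ∀ x ∈ Icc a b, HasDerivAt f (f' x) x) (hg : ∀ x ∈ Icc a b, HasDerivAt g (g' x) x)
    (hle : ∀ x ∈ Ioo a b, f' x ≤ g' x) : f b - f a ≤ g b - g a := by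
  have hmono : MonotoneOn (fun x => g x - f x) (Icc a b) :=
    monotoneOn_of_hasDerivWithinAt_nonneg (convex_Icc a b)
      (fun x hx => ((hg x hx).sub (hf x hx)).continuousAt.continuousWithinAt)
      (fun x hx => ((hg x (interior_subset hx)).sub (hf x (interior_subset hx))).hasDerivWithinAt)
      (fun x hx => sub_nonneg.2 (hle x (by rwa [interior_Icc] at hx)))
  have := hmono (left_mem_Icc.2 hab) (right_mem_Icc.2 hab) hab
  linarith

theorem abs_log_sub_log_bounds {x y : ℝ} (hx : 0 < x) (hy : 0 < y) :
    |x - y| / max x y ≤ |Real.log x - Real.log y| ∧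
      |Real.log x - Real.log y| ≤ |x - y| / min x y := by
  wlog hxy : x ≤ y generalizing x y
  · rw [abs_sub_comm x, abs_sub_comm (Real.log x), max_comm, min_comm]
    exact this hy hx (le_of_not_ge hxy)
  rw [abs_sub_comm, abs_of_nonneg (sub_nonneg.2 hxy), abs_sub_comm,
    abs_of_nonneg (sub_nonneg.2 (Real.log_le_log hx hxy)), max_eq_right hxy, min_eq_left hxy,
    ← Real.log_div hy.ne' hx.ne']
  constructor
  · have := Real.one_sub_inv_le_log_of_pos (div_pos hy hx)
    rwa [inv_div, one_sub_div hy.ne'] at this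
  · have := Real.log_le_sub_one_of_pos (div_pos hy hx)
    rwa [div_sub_one hx.ne'] at this

theorem mul_le_min_mul_one_add {Q Q' X Y t : ℝ} (hQ' : 0 ≤ Q') (hQ'Q : Q' ≤ Q) (hY : 0 ≤ Y)
    (hYX : Y ≤ X) (ht : t ∈ Icc 0 1) :
    (Q + Q' * t) * (X + Y * t) ≤ min (X * (Q + Q')) (Q * (X + Y)) * (1 + t) := by
  obtain ⟨ht0, ht1⟩ := ht
  have ht2 : t ^ 2 ≤ 1 := by nlinarith
  rw [min_mul_of_nonneg _ _ (by linarith)]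
  refine le_min ?_ ?_
  · nlinarith [mul_nonneg hQ' (by nlinarith : 0 ≤ X - Y * t ^ 2),
      mul_nonneg (mul_nonneg (by linarith : 0 ≤ Q) ht0) (sub_nonneg.2 hYX)]
  · nlinarith [mul_nonneg hY (by nlinarith : 0 ≤ Q - Q' * t ^ 2),
      mul_nonneg (mul_nonneg (by linarith : 0 ≤ X) ht0) (sub_nonneg.2 hQ'Q)]

theorem max_mul_one_add_le_two_mul {Q Q' X Y t : ℝ} (hQ' : 0 ≤ Q') (hQ'Q : Q' ≤ Q) (hY : 0 ≤ Y)
    (hYX : Y ≤ X) (ht : t ∈ Icc 0 1) :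
    max (X * (Q + Q')) (Q * (X + Y)) * (1 + t) ≤ 2 * ((Q + Q' * t) * (X + Y * t)) := by
  obtain ⟨ht0, ht1⟩ := ht
  rw [max_mul_of_nonneg _ _ (by linarith)]
  refine max_le ?_ ?_
  · nlinarith [mul_nonneg (mul_nonneg (by linarith : 0 ≤ X) (sub_nonneg.2 hQ'Q)) (sub_nonneg.2 ht1),
      mul_nonneg (mul_nonneg (by linarith : 0 ≤ Q) hY) ht0,
      mul_nonneg (mul_nonneg hQ' hY) (sq_nonneg t)]
  · nlinarith [mul_nonneg (mul_nonneg (by linarith : 0 ≤ Q) (sub_nonneg.2 hYX)) (sub_nonneg.2 ht1),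
      mul_nonneg (mul_nonneg hQ' (by linarith : 0 ≤ X)) ht0,
      mul_nonneg (mul_nonneg hQ' hY) (sq_nonneg t)]

theorem abs_log_sub_log_mul_bounds {A B D s : ℝ} (hA : 0 < A) (hB : 0 < B) (hAB : |A - B| = 1)
    (hD : 0 ≤ D) (hmin : D ≤ min A B * s) (hmax : max A B * s ≤ 2 * D) :
    |Real.log A - Real.log B| * D ≤ s ∧ s ≤ 2 * |Real.log A - Real.log B| * D := by
  obtain ⟨hlow, hup⟩ := abs_log_sub_log_bounds hA hB
  rw [hAB] at hlow hup
  constructor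
  · calc |Real.log A - Real.log B| * D ≤ 1 / min A B * D := by gcongr
      _ ≤ s := by rw [one_div_mul_eq_div, div_le_iff₀ (lt_min hA hB), mul_comm]; exact hmin
  · calc s ≤ 2 * (1 / max A B * D) := by
          rw [one_div_mul_eq_div, mul_div_assoc', le_div_iff₀ (lt_max_of_lt_left hA), mul_comm]
          exact hmax
      _ ≤ 2 * |Real.log A - Real.log B| * D := by rw [mul_assoc]; gcongr

/-- `p / q` and `p' / q'` are the last two convergents of `[0; a₁, …, aₙ]`. -/
structure Continuants where
  p : ℕ
  q : ℕ
  p' : ℕ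
  q' : ℕ

def continuants : List ℕ → Continuants
  | [] => ⟨0, 1, 1, 0⟩
  | a :: l => ⟨(continuants l).q, (continuants l).p + a * (continuants l).q,
      (continuants l).q', (continuants l).p' + a * (continuants l).q'⟩

namespace Continuants

variable (c : Continuants) {t : ℝ}

def num (t : ℝ) : ℝ := c.p + c.p' * t

def den (t : ℝ) : ℝ := c.q + c.q' * t

def det : ℤ := c.p' * c.q - c.p * c.q'

noncomputable def logOneAdd (t : ℝ) : ℝ := Real.log (c.num t + c.den t) - Real.log (c.den t)

theorem num_add_den (t : ℝ) : c.num t + c.den t = (c.p + c.q) + (c.p' + c.q') * t := by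
  simp only [num, den]; ring

theorem hasDerivAt_logOneAdd (hq : 1 ≤ c.q) (ht : 0 ≤ t) :
    HasDerivAt c.logOneAdd (c.det / (c.den t * (c.num t + c.den t))) t := by
  have hden : 0 < c.den t := by unfold den; positivity
  have hnd : 0 < c.num t + c.den t := by rw [num_add_den]; positivity
  have hN : HasDerivAt c.num c.p' t :=
    (((hasDerivAt_id' t).const_mul (c.p' : ℝ)).const_add (c.p : ℝ)).congr_deriv (mul_one _)
  have hD : HasDerivAt c.den c.q' t :=
    (((hasDerivAt_id' t).const_mul (c.q' : ℝ)).const_add (c.q : ℝ)).congr_deriv (mul_one _)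
  refine (((hN.add hD).log hnd.ne').sub (hD.log hden.ne')).congr_deriv ?_
  rw [Pi.add_apply, div_sub_div _ _ hnd.ne' hden.ne', det, num_add_den, mul_comm (c.den t)]
  unfold den
  push_cast
  ring

theorem abs_logOneAdd_sub_mul_bounds (hq : 1 ≤ c.q) (hq' : c.q' ≤ c.q)
    (hsum : c.p' + c.q' ≤ c.p + c.q) (hdet : |(c.det : ℝ)| = 1) (ht : t ∈ Icc 0 1) :
    |c.logOneAdd 0 - c.logOneAdd 1| * (c.den t * (c.num t + c.den t)) ≤ 1 + t ∧
      1 + t ≤ 2 * |c.logOneAdd 0 - c.logOneAdd 1| * (c.den t * (c.num t + c.den t)) := by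
  have hq : (1 : ℝ) ≤ c.q := by exact_mod_cast hq
  have hq' : (c.q' : ℝ) ≤ c.q := by exact_mod_cast hq'
  have hsum : (c.p' : ℝ) + c.q' ≤ c.p + c.q := by exact_mod_cast hsum
  have hlog : c.logOneAdd 0 - c.logOneAdd 1 = Real.log ((c.p + c.q) * (c.q + c.q')) -
      Real.log (c.q * ((c.p + c.q) + (c.p' + c.q'))) := by
    simp only [logOneAdd, num_add_den]
    simp only [den]
    rw [Real.log_mul (by positivity) (by positivity), Real.log_mul (by positivity) (by positivity)]
    simp only [mul_zero, add_zero, mul_one]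
    ring
  have hAB : |((c.p : ℝ) + c.q) * (c.q + c.q') - c.q * ((c.p + c.q) + (c.p' + c.q'))| = 1 := by
    have hdet' : (c.det : ℝ) = c.p' * c.q - c.p * c.q' := by simp [det]
    rw [← hdet, hdet', ← abs_neg]
    congr 1
    ring
  rw [hlog, num_add_den]
  exact abs_log_sub_log_mul_bounds (by positivity) (by positivity) hAB
    (mul_nonneg (by unfold den; have := ht.1; positivity) (by have := ht.1; positivity))
    (mul_le_min_mul_one_add (Nat.cast_nonneg _) hq' (by positivity) hsum ht)
    (max_mul_one_add_le_two_mul (Nat.cast_nonneg _) hq' (by positivity) hsum ht)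

theorem det_mul_logOneAdd_sub_bounds (hq : 1 ≤ c.q) (hq' : c.q' ≤ c.q)
    (hsum : c.p' + c.q' ≤ c.p + c.q) (hdet : |(c.det : ℝ)| = 1) {x y : ℝ} (hx : 0 ≤ x)
    (hxy : x ≤ y) (hy : y ≤ 1) :
    |c.logOneAdd 0 - c.logOneAdd 1| * (Real.log (1 + y) - Real.log (1 + x)) ≤
        c.det * (c.logOneAdd y - c.logOneAdd x) ∧
      c.det * (c.logOneAdd y - c.logOneAdd x) ≤
        2 * |c.logOneAdd 0 - c.logOneAdd 1| * (Real.log (1 + y) - Real.log (1 + x)) := by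
  set κ := |c.logOneAdd 0 - c.logOneAdd 1|
  have hsub : Icc x y ⊆ Icc 0 1 := Icc_subset_Icc hx hy
  have hlog (k : ℝ) : ∀ s ∈ Icc x y,
      HasDerivAt (fun s => k * Real.log (1 + s)) (k * (1 / (1 + s))) s := fun s hs =>
    (((hasDerivAt_id' s).const_add 1).log (by linarith [(hsub hs).1])).const_mul k
  have hF : ∀ s ∈ Icc x y, HasDerivAt (fun s => c.det * c.logOneAdd s)
      (1 / (c.den s * (c.num s + c.den s))) s := fun s hs =>
    ((c.hasDerivAt_logOneAdd hq (hsub hs).1).const_mul _).congr_deriv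
      (by rw [mul_div_assoc', ← abs_mul_abs_self, hdet, one_mul])
  have hbounds : ∀ s ∈ Ioo x y, 0 < 1 + s ∧ 0 < c.den s * (c.num s + c.den s) ∧
      κ * (c.den s * (c.num s + c.den s)) ≤ 1 + s ∧
      1 + s ≤ 2 * κ * (c.den s * (c.num s + c.den s)) := fun s hs => by
    have hs := hsub (Ioo_subset_Icc_self hs)
    have hden : 0 < c.den s := by unfold den; have := hs.1; positivity
    refine ⟨by linarith [hs.1], mul_pos hden (by rw [num_add_den]; have := hs.1; positivity),
      c.abs_logOneAdd_sub_mul_bounds hq hq' hsum hdet hs⟩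
  have hlow := sub_le_sub_of_hasDerivAt_le hxy (hlog κ) hF fun s hs => by
    obtain ⟨h1s, hQ, hle, -⟩ := hbounds s hs
    rw [← div_eq_mul_one_div, div_le_div_iff₀ h1s hQ]
    linarith
  have hup := sub_le_sub_of_hasDerivAt_le hxy hF (hlog (2 * κ)) fun s hs => by
    obtain ⟨h1s, hQ, -, hle⟩ := hbounds s hs
    rw [← div_eq_mul_one_div, div_le_div_iff₀ hQ h1s]
    linarith
  constructor <;> linarith

end Continuants

theorem continuants_bounds {l : List ℕ} (hl : ∀ a ∈ l, 1 ≤ a) :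
    1 ≤ (continuants l).q ∧ (continuants l).q' ≤ (continuants l).q ∧
      (continuants l).p' + (continuants l).q' ≤ (continuants l).p + (continuants l).q := by
  induction l with
  | nil => simp [continuants]
  | cons a l ih =>
    obtain ⟨hq, hq', hsum⟩ := ih fun x hx => hl x (List.mem_cons_of_mem a hx)
    have ha : 1 ≤ a := hl a List.mem_cons_self
    simp only [continuants]
    refine ⟨?_, ?_, ?_⟩ <;> nlinarith

theorem det_continuants (l : List ℕ) : (continuants l).det = (-1) ^ l.length := by
  induction l with
  | nil => simp [continuants, Continuants.det]
  | cons a l ih =>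
    simp only [Continuants.det, continuants, List.length_cons, pow_succ] at ih ⊢
    push_cast
    linear_combination (-1 : ℤ) * ih

theorem abs_det_continuants (l : List ℕ) : |((continuants l).det : ℝ)| = 1 := by
  simp [det_continuants]

/-- `invBranch [a₁, …, aₙ] t = [0; a₁, …, aₙ + t]`, the inverse of `Tⁿ` on `I(a₁, …, aₙ)`. -/
noncomputable def invBranch : List ℕ → ℝ → ℝ
  | [], t => t
  | a :: l, t => (a + invBranch l t)⁻¹

theorem invBranch_append (l₁ l₂ : List ℕ) (t : ℝ) :
    invBranch (l₁ ++ l₂) t = invBranch l₁ (invBranch l₂ t) := by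
  induction l₁ with
  | nil => rfl
  | cons a l ih => simp only [List.cons_append, invBranch, ih]

theorem invBranch_mem_Icc {l : List ℕ} (hl : ∀ a ∈ l, 1 ≤ a) {t : ℝ} (ht : t ∈ Icc 0 1) :
    invBranch l t ∈ Icc 0 1 := by
  induction l with
  | nil => exact ht
  | cons a l ih =>
    have hx := (ih fun x hx => hl x (List.mem_cons_of_mem a hx)).1
    have ha : (1 : ℝ) ≤ a := by exact_mod_cast hl a List.mem_cons_self
    exact ⟨by simp only [invBranch]; positivity, inv_le_one_of_one_le₀ (by linarith)⟩

theorem den_continuants_pos {l : List ℕ} (hl : ∀ a ∈ l, 1 ≤ a) {t : ℝ} (ht : 0 ≤ t) :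
    0 < (continuants l).den t := by
  have : (1 : ℝ) ≤ (continuants l).q := by exact_mod_cast (continuants_bounds hl).1
  unfold Continuants.den; positivity

theorem invBranch_eq {l : List ℕ} (hl : ∀ a ∈ l, 1 ≤ a) {t : ℝ} (ht : 0 ≤ t) :
    invBranch l t = (continuants l).num t / (continuants l).den t := by
  induction l with
  | nil => simp [invBranch, continuants, Continuants.num, Continuants.den]
  | cons a l ih =>
    have hl' : ∀ x ∈ l, 1 ≤ x := fun x hx => hl x (List.mem_cons_of_mem a hx)
    have hden := den_continuants_pos hl' ht
    rw [invBranch, ih hl']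
    simp only [continuants, Continuants.num, Continuants.den] at hden ⊢
    rw [add_div' _ _ _ hden.ne', inv_div]
    push_cast
    congr 1
    ring

theorem invBranch_sub_invBranch {l : List ℕ} (hl : ∀ a ∈ l, 1 ≤ a) {x y : ℝ} (hx : 0 ≤ x)
    (hy : 0 ≤ y) :
    invBranch l y - invBranch l x =
      (continuants l).det * (y - x) / ((continuants l).den x * (continuants l).den y) := by
  have hdx := den_continuants_pos hl hx
  have hdy := den_continuants_pos hl hy
  rw [invBranch_eq hl hx, invBranch_eq hl hy, div_sub_div _ _ hdy.ne' hdx.ne']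
  simp only [Continuants.num, Continuants.den, Continuants.det]
  push_cast
  ring

theorem strictMonoOn_or_strictAntiOn_invBranch {l : List ℕ} (hl : ∀ a ∈ l, 1 ≤ a) :
    StrictMonoOn (invBranch l) (Ici 0) ∨ StrictAntiOn (invBranch l) (Ici 0) := by
  have hsub : ∀ x ∈ Ici (0 : ℝ), ∀ y ∈ Ici (0 : ℝ), x < y →
      0 < (continuants l).det * (invBranch l y - invBranch l x) := by
    intro x hx y hy hxy
    rw [invBranch_sub_invBranch hl hx hy, mul_div_assoc', ← mul_assoc, ← sq, ← sq_abs,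
      abs_det_continuants, one_pow, one_mul]
    exact div_pos (sub_pos.2 hxy) (mul_pos (den_continuants_pos hl hx) (den_continuants_pos hl hy))
  rcases neg_one_pow_eq_or ℤ l.length with h | h <;> rw [← det_continuants] at h <;>
    simp only [h, Int.cast_one, Int.cast_neg, one_mul, neg_one_mul, neg_sub] at hsub
  · exact Or.inl fun x hx y hy hxy => sub_pos.1 (hsub x hx y hy hxy)
  · exact Or.inr fun x hx y hy hxy => sub_pos.1 (hsub x hx y hy hxy)

theorem continuousOn_invBranch {l : List ℕ} (hl : ∀ a ∈ l, 1 ≤ a) :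
    ContinuousOn (invBranch l) (Ici 0) := by
  refine ContinuousOn.congr ?_ fun t ht => invBranch_eq hl ht
  exact ContinuousOn.div (by unfold Continuants.num; fun_prop) (by unfold Continuants.den; fun_prop)
    fun t ht => (den_continuants_pos hl ht).ne'

theorem image_invBranch_Ioo {l : List ℕ} (hl : ∀ a ∈ l, 1 ≤ a) :
    invBranch l '' Ioo 0 1 = uIoo (invBranch l 0) (invBranch l 1) := by
  have hcont : ContinuousOn (invBranch l) (Icc 0 1) :=
    (continuousOn_invBranch hl).mono Icc_subset_Ici_self
  rcases strictMonoOn_or_strictAntiOn_invBranch hl with h | h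
  · rw [hcont.image_Ioo_of_strictMonoOn zero_le_one (h.mono Icc_subset_Ici_self),
      uIoo_of_lt (h self_mem_Ici (mem_Ici.2 zero_le_one) zero_lt_one)]
  · rw [hcont.image_Ioo_of_strictAntiOn zero_le_one (h.mono Icc_subset_Ici_self),
      uIoo_of_gt (h self_mem_Ici (mem_Ici.2 zero_le_one) zero_lt_one)]

instance : NullSingletonClass gaussMeasure := by
  unfold gaussMeasure; infer_instance

theorem gaussMeasure_Ioo {u v : ℝ} (hu : 0 ≤ u) (huv : u ≤ v) (hv : v ≤ 1) :
    gaussMeasure (Ioo u v) =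
      ENNReal.ofReal ((Real.log (1 + v) - Real.log (1 + u)) / Real.log 2) := by
  have hlog2 : 0 < Real.log 2 := Real.log_pos one_lt_two
  have hderiv : ∀ x ∈ uIcc u v,
      HasDerivAt (fun y => Real.log (1 + y) / Real.log 2) (1 / (Real.log 2 * (1 + x))) x := by
    intro x hx
    rw [uIcc_of_le huv] at hx
    have h1x : 1 + x ≠ 0 := by linarith [hx.1]
    exact ((((hasDerivAt_id' x).const_add 1).log h1x).div_const (Real.log 2)).congr_deriv
      (by rw [div_div, mul_comm])
  have hcont : ContinuousOn (fun x : ℝ => 1 / (Real.log 2 * (1 + x))) (Icc u v) :=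
    continuousOn_const.div (by fun_prop) fun x hx => (mul_pos hlog2 (by linarith [hx.1])).ne'
  rw [gaussMeasure, withDensity_apply _ measurableSet_Ioo,
    Measure.restrict_restrict measurableSet_Ioo, inter_eq_left.2 (Ioo_subset_Ioo hu hv),
    ← ofReal_integral_eq_lintegral_ofReal
      ((hcont.integrableOn_Icc).mono_set Ioo_subset_Icc_self)
      ((ae_restrict_iff' measurableSet_Ioo).2 (ae_of_all _ fun x hx => by
        have : 0 < 1 + x := by linarith [hx.1]
        positivity)),
    ← integral_Ioc_eq_integral_Ioo, ← intervalIntegral.integral_of_le huv,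
    intervalIntegral.integral_eq_sub_of_hasDerivAt hderiv
      ((uIcc_of_le huv).symm ▸ hcont).intervalIntegrable, sub_div]

noncomputable def gaussDist (x y : ℝ) : ℝ := |Real.log (1 + x) - Real.log (1 + y)|

theorem gaussDist_comm (x y : ℝ) : gaussDist x y = gaussDist y x := abs_sub_comm _ _

theorem gaussMeasure_uIoo {x y : ℝ} (hx : x ∈ Icc 0 1) (hy : y ∈ Icc 0 1) :
    gaussMeasure (uIoo x y) = ENNReal.ofReal (gaussDist x y / Real.log 2) := by
  wlog hxy : x ≤ y generalizing x y
  · rw [uIoo_comm, gaussDist_comm, this hy hx (le_of_not_ge hxy)]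
  rw [uIoo_of_le hxy, gaussMeasure_Ioo hx.1 hxy hy.2, gaussDist, abs_sub_comm,
    abs_of_nonneg (sub_nonneg.2 (Real.log_le_log (by linarith [hx.1]) (by linarith)))]

theorem gaussDist_pos {x y : ℝ} (hx : 0 ≤ x) (hy : 0 ≤ y) (hxy : x ≠ y) : 0 < gaussDist x y := by
  refine abs_pos.2 (sub_ne_zero.2 fun h => hxy ?_)
  have := Real.log_injOn_pos (mem_Ioi.2 (by linarith : (0 : ℝ) < 1 + x))
    (mem_Ioi.2 (by linarith : (0 : ℝ) < 1 + y)) h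
  linarith

theorem cfDigit_succ (i : ℕ) (ω : ℝ) : cfDigit (i + 1) ω = cfDigit i (gaussMap ω) := by
  rw [cfDigit, cfDigit, Function.iterate_succ_apply]

theorem cfDigit_zero_inv_natCast_add (a : ℕ) {x : ℝ} (hx : x ∈ Ico 0 1) :
    cfDigit 0 ((a : ℝ) + x)⁻¹ = a := by
  rw [cfDigit, Function.iterate_zero_apply, one_div, inv_inv,
    Nat.floor_eq_iff (by linarith [hx.1])]
  exact ⟨by linarith [hx.1], by linarith [hx.2]⟩

theorem gaussMap_inv_natCast_add (a : ℕ) {x : ℝ} (hx : x ∈ Ico 0 1) :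
    gaussMap ((a : ℝ) + x)⁻¹ = x := by
  rw [gaussMap, one_div, inv_inv, Int.fract_natCast_add, Int.fract_eq_self.2 hx]

theorem inv_cfDigit_zero_add_gaussMap {ω : ℝ} (hω : 0 < ω) :
    ((cfDigit 0 ω : ℝ) + gaussMap ω)⁻¹ = ω := by
  rw [cfDigit, gaussMap, Function.iterate_zero_apply,
    natCast_floor_eq_intCast_floor (by positivity), Int.floor_add_fract, one_div, inv_inv]

theorem gaussMap_mem_Ioo {ω : ℝ} (hω : Irrational ω) :
    gaussMap ω ∈ Ioo 0 1 ∧ Irrational (gaussMap ω) := by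
  have hirr : Irrational (gaussMap ω) := by
    rw [gaussMap, one_div, ← Int.self_sub_floor]
    exact hω.inv.sub_intCast _
  exact ⟨⟨(Int.fract_nonneg _).lt_of_ne (hirr.ne_zero).symm, Int.fract_lt_one _⟩, hirr⟩

theorem cylinder_succ {n : ℕ} (a : Fin (n + 1) → ℕ) (ha : 1 ≤ a 0) :
    cylinder (n + 1) a = (fun x => ((a 0 : ℝ) + x)⁻¹) '' cylinder n (Fin.tail a) := by
  ext ω
  constructor
  · rintro ⟨hω, hirr, hdigit⟩
    refine ⟨gaussMap ω, ⟨(gaussMap_mem_Ioo hirr).1, (gaussMap_mem_Ioo hirr).2, fun i => ?_⟩, ?_⟩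
    · rw [← cfDigit_succ]; exact hdigit i.succ
    · rw [← hdigit 0]; exact inv_cfDigit_zero_add_gaussMap hω.1
  · rintro ⟨x, ⟨hx, hxirr, hdigit⟩, rfl⟩
    have ha' : (1 : ℝ) ≤ a 0 := by exact_mod_cast ha
    refine ⟨⟨inv_pos.2 (by linarith [hx.1]), inv_lt_one_of_one_lt₀ (by linarith [hx.1])⟩,
      (hxirr.natCast_add _).inv, Fin.cases ?_ fun i => ?_⟩
    · exact cfDigit_zero_inv_natCast_add _ (Ioo_subset_Ico_self hx)
    · rw [Fin.val_succ, cfDigit_succ, gaussMap_inv_natCast_add _ (Ioo_subset_Ico_self hx)]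
      exact hdigit i

theorem cylinder_eq_image_invBranch (n : ℕ) (a : Fin n → ℕ) (ha : ∀ i, 1 ≤ a i) :
    cylinder n a = invBranch (List.ofFn a) '' (Ioo 0 1 \ range ((↑) : ℚ → ℝ)) := by
  induction n with
  | zero =>
    ext ω
    simp [_root_.cylinder, invBranch, Irrational]
  | succ n ih =>
    rw [cylinder_succ a (ha 0), ih (Fin.tail a) fun i => ha i.succ, image_image, List.ofFn_succ]
    rfl

theorem gaussMeasure_cylinder (n : ℕ) (a : Fin n → ℕ) (ha : ∀ i, 1 ≤ a i) :
    gaussMeasure (cylinder n a) = ENNReal.ofReal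
      (gaussDist (invBranch (List.ofFn a) 0) (invBranch (List.ofFn a) 1) / Real.log 2) := by
  have hl : ∀ x ∈ List.ofFn a, 1 ≤ x := List.forall_mem_ofFn_iff.2 ha
  set ψ := invBranch (List.ofFn a)
  set ℚ' := range ((↑) : ℚ → ℝ)
  have hnull : gaussMeasure (ψ '' ℚ') = 0 := ((countable_range _).image ψ).measure_zero _
  have hcover : ψ '' Ioo 0 1 ⊆ ψ '' (Ioo 0 1 \ ℚ') ∪ ψ '' ℚ' := by
    rw [← image_union, sdiff_union_self]; exact image_mono subset_union_left
  rw [cylinder_eq_image_invBranch n a ha,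
    ← gaussMeasure_uIoo (invBranch_mem_Icc hl (left_mem_Icc.2 zero_le_one))
      (invBranch_mem_Icc hl (right_mem_Icc.2 zero_le_one)), ← image_invBranch_Ioo hl]
  refine le_antisymm (measure_mono (image_mono sdiff_subset)) ?_
  calc gaussMeasure (ψ '' Ioo 0 1) ≤ gaussMeasure (ψ '' (Ioo 0 1 \ ℚ')) + gaussMeasure (ψ '' ℚ') :=
        (measure_mono hcover).trans (measure_union_le _ _)
    _ = gaussMeasure (ψ '' (Ioo 0 1 \ ℚ')) := by rw [hnull, add_zero]

theorem toReal_gaussMeasure_cylinder (n : ℕ) (a : Fin n → ℕ) (ha : ∀ i, 1 ≤ a i) :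
    (gaussMeasure (cylinder n a)).toReal =
      gaussDist (invBranch (List.ofFn a) 0) (invBranch (List.ofFn a) 1) / Real.log 2 := by
  rw [gaussMeasure_cylinder n a ha]
  exact ENNReal.toReal_ofReal (div_nonneg (abs_nonneg _) (Real.log_pos one_lt_two).le)

theorem log_one_add_invBranch {l : List ℕ} (hl : ∀ a ∈ l, 1 ≤ a) {t : ℝ} (ht : 0 ≤ t) :
    Real.log (1 + invBranch l t) = (continuants l).logOneAdd t := by
  have hden := den_continuants_pos hl ht
  have hnum : 0 ≤ (continuants l).num t := by unfold Continuants.num; positivity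
  rw [invBranch_eq hl ht, one_add_div hden.ne', Real.log_div (by linarith) hden.ne',
    Continuants.logOneAdd, add_comm]

theorem gaussDist_invBranch_bounds {l : List ℕ} (hl : ∀ a ∈ l, 1 ≤ a) {x y : ℝ}
    (hx : x ∈ Icc 0 1) (hy : y ∈ Icc 0 1) :
    gaussDist (invBranch l 0) (invBranch l 1) * gaussDist x y ≤
        gaussDist (invBranch l x) (invBranch l y) ∧
      gaussDist (invBranch l x) (invBranch l y) ≤
        2 * gaussDist (invBranch l 0) (invBranch l 1) * gaussDist x y := by
  wlog hxy : x ≤ y generalizing x y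
  · rw [gaussDist_comm x, gaussDist_comm (invBranch l x)]
    exact this hy hx (le_of_not_ge hxy)
  obtain ⟨hq, hq', hsum⟩ := continuants_bounds hl
  have hdet := abs_det_continuants l
  obtain ⟨hlow, hup⟩ :=
    (continuants l).det_mul_logOneAdd_sub_bounds hq hq' hsum hdet hx.1 hxy hy.2
  have hL : 0 ≤ Real.log (1 + y) - Real.log (1 + x) :=
    sub_nonneg.2 (Real.log_le_log (by linarith [hx.1]) (by linarith))
  have hκ := abs_nonneg ((continuants l).logOneAdd 0 - (continuants l).logOneAdd 1)
  simp only [gaussDist, log_one_add_invBranch hl hx.1, log_one_add_invBranch hl hy.1,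
    log_one_add_invBranch hl le_rfl, log_one_add_invBranch hl zero_le_one]
  have hF : |(continuants l).logOneAdd x - (continuants l).logOneAdd y| =
      (continuants l).det * ((continuants l).logOneAdd y - (continuants l).logOneAdd x) := by
    rw [abs_sub_comm, ← one_mul |_ - _|, ← hdet, ← abs_mul, abs_of_nonneg (by nlinarith)]
  rw [abs_sub_comm (Real.log _), abs_of_nonneg hL, hF]
  exact ⟨hlow, hup⟩

theorem invBranch_zero_ne_one {l : List ℕ} (hl : ∀ a ∈ l, 1 ≤ a) :
    invBranch l 0 ≠ invBranch l 1 := by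
  rcases strictMonoOn_or_strictAntiOn_invBranch hl with h | h
  · exact (h self_mem_Ici (mem_Ici.2 zero_le_one) zero_lt_one).ne
  · exact (h self_mem_Ici (mem_Ici.2 zero_le_one) zero_lt_one).ne'

theorem gaussDist_invBranch_zero_one_pos {l : List ℕ} (hl : ∀ a ∈ l, 1 ≤ a) :
    0 < gaussDist (invBranch l 0) (invBranch l 1) :=
  gaussDist_pos (invBranch_mem_Icc hl (left_mem_Icc.2 zero_le_one)).1
    (invBranch_mem_Icc hl (right_mem_Icc.2 zero_le_one)).1 (invBranch_zero_ne_one hl)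

theorem gauss_measure_quasi_independence_general
    (m n : ℕ)
    (a : Fin m → ℕ) (b : Fin n → ℕ) (ha : ∀ i, 1 ≤ a i) (hb : ∀ i, 1 ≤ b i) :
    Real.log 2 ≤
      (gaussMeasure (cylinder (m + n) (Fin.append a b))).toReal /
        ((gaussMeasure (cylinder m a)).toReal * (gaussMeasure (cylinder n b)).toReal) ∧
    (gaussMeasure (cylinder (m + n) (Fin.append a b))).toReal /
        ((gaussMeasure (cylinder m a)).toReal * (gaussMeasure (cylinder n b)).toReal)
      ≤ 2 * Real.log 2 := by
  have hla : ∀ x ∈ List.ofFn a, 1 ≤ x := List.forall_mem_ofFn_iff.2 ha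
  have hlb : ∀ x ∈ List.ofFn b, 1 ≤ x := List.forall_mem_ofFn_iff.2 hb
  have hab : ∀ i, 1 ≤ Fin.append a b i := Fin.addCases (by simpa using ha) (by simpa using hb)
  have hlog2 : 0 < Real.log 2 := Real.log_pos one_lt_two
  obtain ⟨hlow, hup⟩ := gaussDist_invBranch_bounds hla
    (invBranch_mem_Icc hlb (left_mem_Icc.2 zero_le_one))
    (invBranch_mem_Icc hlb (right_mem_Icc.2 zero_le_one))
  have hκ := mul_pos (gaussDist_invBranch_zero_one_pos hla) (gaussDist_invBranch_zero_one_pos hlb)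
  rw [toReal_gaussMeasure_cylinder _ _ hab, toReal_gaussMeasure_cylinder _ _ ha,
    toReal_gaussMeasure_cylinder _ _ hb, List.ofFn_fin_append]
  simp only [invBranch_append]
  generalize gaussDist (invBranch (List.ofFn a) 0) (invBranch (List.ofFn a) 1) = κa at *
  generalize gaussDist (invBranch (List.ofFn b) 0) (invBranch (List.ofFn b) 1) = κb at *
  generalize gaussDist _ _ = D at *
  rw [show D / Real.log 2 / (κa / Real.log 2 * (κb / Real.log 2)) = Real.log 2 * (D / (κa * κb)) by
    field_simp]
  constructor
  · exact le_mul_of_one_le_right hlog2.le ((one_le_div hκ).2 hlow)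
  · rw [mul_comm 2]
    exact mul_le_mul_of_nonneg_left ((div_le_iff₀ hκ).2 (by linarith)) hlog2.le

theorem gauss_measure_quasi_independence
    (m n : ℕ) (hm : 1 ≤ m) (hn : 1 ≤ n)
    (a : Fin m → ℕ) (b : Fin n → ℕ) (ha : ∀ i, 1 ≤ a i) (hb : ∀ i, 1 ≤ b i) :
    Real.log 2 ≤
      (gaussMeasure (cylinder (m + n) (Fin.append a b))).toReal /
        ((gaussMeasure (cylinder m a)).toReal * (gaussMeasure (cylinder n b)).toReal) ∧
    (gaussMeasure (cylinder (m + n) (Fin.append a b))).toReal /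
        ((gaussMeasure (cylinder m a)).toReal * (gaussMeasure (cylinder n b)).toReal)
      ≤ 2 * Real.log 2 :=
  gauss_measure_quasi_independence_general m n a b ha hb
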